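/- Let f = (1/n)∑_{i=1}^n f_i with each f_i convex, L-smooth, and ∇f_i(x) supported on T_i. Let D, D_i be the sparse estimator matrices, 0 < θ < 1, Δτ̃ ≥ 0 a real constant, η = (1-θ)/(Lθ(1+Δτ̃)), φ = (1-θ)/L. Suppose for each k = 0,…,m-1, ŷ_k = θẑ_k + (1-θ)x̃ - φD∇f(x̃) and the averaged one-step bound ∑_{k=0}^{m-1}(f(ŷ_k) - f(x★)) ≤ ∑_{k=0}^{m-1}[ ((1-θ)/θ)⟨∇f(ŷ_k), x̃ - ŷ_k⟩ - (φ/θ)⟨∇f(ŷ_k), D∇f(x̃)⟩ + ((1-θ)/(2Lθ))·V_k ] + (Lθ(1+Δτ̃)/(2(1-θ)))(‖z_0 - x★‖² - ‖z_m - x★‖²) holds, where V_k = (1/n)∑_i ‖∇f_i(ŷ_k) - ∇f_i(x̃) + D_i∇f(x̃)‖². Then (1/m)∑_{k=0}^{m-1}(f(ŷ_k) - f(x★)) ≤ (1-θ)(f(x̃) - f(x★)) + (Lθ²(1+Δτ̃)/(2m(1-θ)))(‖z_0 - x★‖² - ‖z_m - x★‖²). -/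

import Mathlib

/-!
Each `fᵢ` is convex with `L`-Lipschitz gradient, hence co-coercive:
`‖∇fᵢ x - ∇fᵢ y‖² ≤ 2L (fᵢ x - fᵢ y - ⟪∇fᵢ y, x - y⟫)`. Since `Dᵢ∇f(x̃)` is `D∇f(x̃)` masked to the
support `Tᵢ` of `∇fᵢ`, averaging over `i` turns the cross term of `V_k` into
`⟪∇f(ŷ_k) - ∇f(x̃), D∇f(x̃)⟫` and the square term into `⟪∇f(x̃), D∇f(x̃)⟫ ≥ 0`. With
`φ = (1 - θ)/L` the remaining `⟪∇f(ŷ_k), D∇f(x̃)⟫` cancels, so each summand of the one-step bound is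
at most `((1 - θ)/θ) (f(x̃) - f(ŷ_k))`; summing over `k` and solving for
`∑ (f(ŷ_k) - f(x★))` gives the claim.
-/

open scoped RealInnerProductSpace

section SmoothConvex

variable {E : Type*} [NormedAddCommGroup E] [InnerProductSpace ℝ E] [CompleteSpace E]
  {f : E → ℝ} {g : E → E}

theorem HasGradientAt.hasDerivAt_comp_add_smul {g' x v : E} {t : ℝ}
    (h : HasGradientAt f g' (x + t • v)) :
    HasDerivAt (fun s : ℝ => f (x + s • v)) ⟪g', v⟫ t := by
  have hline : HasDerivAt (fun s : ℝ => x + s • v) v t := by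
    simpa using ((hasDerivAt_id t).smul_const v).const_add x
  have := (hasGradientAt_iff_hasFDerivAt.mp h).comp_hasDerivAt t hline
  rw [InnerProductSpace.toDual_apply_apply] at this
  exact this

theorem ConvexOn.add_inner_le_of_hasGradientAt (hf : ConvexOn ℝ Set.univ f) {g' x : E}
    (h : HasGradientAt f g' x) (y : E) : f x + ⟪g', y - x⟫ ≤ f y := by
  have hline : ConvexOn ℝ Set.univ fun t : ℝ => f (x + t • (y - x)) := by
    have hcomp : (fun t : ℝ => f (x + t • (y - x))) = f ∘ AffineMap.lineMap x y := by
      funext t; simp [AffineMap.lineMap_apply, add_comm]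
    simpa [hcomp] using hf.comp_affineMap (AffineMap.lineMap x y)
  have h0 : HasGradientAt f g' (x + (0 : ℝ) • (y - x)) := by simpa using h
  have hslope := hline.le_slope_of_hasDerivAt trivial trivial one_pos
    h0.hasDerivAt_comp_add_smul
  simp only [slope_def_field, one_smul, add_sub_cancel, zero_smul, add_zero, sub_zero,
    div_one] at hslope
  linarith

theorem le_add_inner_add_sq_of_lipschitzWith_gradient (hg : ∀ x, HasGradientAt f (g x) x)
    {L : ℝ} (hL : 0 ≤ L) (hlip : LipschitzWith L.toNNReal g) (x y : E) :
    f y ≤ f x + ⟪g x, y - x⟫ + L / 2 * ‖y - x‖ ^ 2 := by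
  set v := y - x
  set ψ : ℝ → ℝ := fun t => f (x + t • v) - t * ⟪g x, v⟫ - L / 2 * t ^ 2 * ‖v‖ ^ 2
  have hψ : ∀ t, HasDerivAt ψ (⟪g (x + t • v) - g x, v⟫ - L * t * ‖v‖ ^ 2) t := by
    intro t
    have := ((hg (x + t • v)).hasDerivAt_comp_add_smul.sub
      ((hasDerivAt_id t).mul_const ⟪g x, v⟫)).sub
      (((hasDerivAt_pow 2 t).const_mul (L / 2)).mul_const (‖v‖ ^ 2))
    refine this.congr_deriv ?_
    rw [inner_sub_left]
    simp only [Nat.cast_ofNat, one_mul, Nat.reduceSub, pow_one]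
    ring
  have hanti : AntitoneOn ψ (Set.Icc 0 1) := by
    refine antitoneOn_of_hasDerivWithinAt_nonpos (convex_Icc 0 1)
      (fun t _ => (hψ t).continuousAt.continuousWithinAt) (fun t _ => (hψ t).hasDerivWithinAt)
      fun t ht => ?_
    rw [interior_Icc] at ht
    have hdist : ‖g (x + t • v) - g x‖ ≤ L * (t * ‖v‖) := by
      simpa [dist_eq_norm, norm_smul, abs_of_pos ht.1, Real.coe_toNNReal L hL] using
        hlip.dist_le_mul (x + t • v) x
    have := (real_inner_le_norm _ v).trans (mul_le_mul_of_nonneg_right hdist (norm_nonneg v))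
    linarith
  have h01 := hanti (Set.left_mem_Icc.mpr zero_le_one) (Set.right_mem_Icc.mpr zero_le_one)
    zero_le_one
  simp only [ψ, v, one_smul, add_sub_cancel, zero_smul, add_zero, one_mul, one_pow, mul_one,
    zero_mul, sub_zero, ne_eq, OfNat.ofNat_ne_zero, not_false_eq_true, zero_pow, mul_zero] at h01
  linarith

theorem norm_sub_sq_le_of_lipschitzWith_gradient (hg : ∀ x, HasGradientAt f (g x) x)
    (hf : ConvexOn ℝ Set.univ f) {L : ℝ} (hL : 0 < L) (hlip : LipschitzWith L.toNNReal g)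
    (x y : E) :
    ‖g x - g y‖ ^ 2 ≤ 2 * L * (f x - f y - ⟪g y, x - y⟫) := by
  set w := g x - g y
  set z := x - L⁻¹ • w
  have hlower := hf.add_inner_le_of_hasGradientAt (hg y) z
  have hupper := le_add_inner_add_sq_of_lipschitzWith_gradient hg hL.le hlip x z
  have hzx : z - x = -(L⁻¹ • w) := by simp [z]
  have hzy : z - y = (x - y) - L⁻¹ • w := by simp only [z]; abel
  have hw : L⁻¹ * ⟪g x, w⟫ - L⁻¹ * ⟪g y, w⟫ = L⁻¹ * ‖w‖ ^ 2 := by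
    rw [← mul_sub, ← inner_sub_left, real_inner_self_eq_norm_sq]
  rw [hzy, inner_sub_right, real_inner_smul_right] at hlower
  rw [hzx, inner_neg_right, real_inner_smul_right, norm_neg, norm_smul, mul_pow,
    Real.norm_eq_abs, abs_of_pos (inv_pos.mpr hL)] at hupper
  have hsq : L / 2 * (L⁻¹ ^ 2 * ‖w‖ ^ 2) = L⁻¹ * ‖w‖ ^ 2 / 2 := by field_simp
  have key : L⁻¹ * ‖w‖ ^ 2 ≤ 2 * (f x - f y - ⟪g y, x - y⟫) := by linarith
  calc ‖w‖ ^ 2 = L * (L⁻¹ * ‖w‖ ^ 2) := by field_simp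
    _ ≤ 2 * L * (f x - f y - ⟪g y, x - y⟫) := by nlinarith

end SmoothConvex

theorem mean_norm_sub_sq_le {E : Type*} [NormedAddCommGroup E] [InnerProductSpace ℝ E]
    [CompleteSpace E] {n : ℕ} {L : ℝ} (hL : 0 < L) {fi : Fin n → E → ℝ} {gi : Fin n → E → E}
    (hgrad : ∀ i x, HasGradientAt (fi i) (gi i x) x) (hconv : ∀ i, ConvexOn ℝ Set.univ (fi i))
    (hlip : ∀ i, LipschitzWith L.toNNReal (gi i)) {F : E → ℝ}
    (hF : ∀ x, F x = (1 / n : ℝ) * ∑ i, fi i x) {gF : E → E}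
    (hgF : ∀ x, gF x = (n : ℝ)⁻¹ • ∑ i, gi i x) (x y : E) :
    (1 / n : ℝ) * ∑ i, ‖gi i y - gi i x‖ ^ 2 ≤ 2 * L * (F x - F y - ⟪gF y, x - y⟫) := by
  calc (1 / n : ℝ) * ∑ i, ‖gi i y - gi i x‖ ^ 2
      ≤ (1 / n : ℝ) * ∑ i, 2 * L * (fi i x - fi i y - ⟪gi i y, x - y⟫) := by
        gcongr with i
        rw [norm_sub_rev]
        exact norm_sub_sq_le_of_lipschitzWith_gradient (hgrad i) (hconv i) hL (hlip i) x y
    _ = 2 * L * (F x - F y - ⟪gF y, x - y⟫) := by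
        rw [hF, hF, hgF, real_inner_smul_left, sum_inner, ← Finset.mul_sum,
          Finset.sum_sub_distrib, Finset.sum_sub_distrib]
        ring

section SparseMask

variable {ι : Type*} {n : ℕ} {p : Fin n → ι → ℝ} {Dv : ι → ℝ}

theorem nonneg_of_mul_mean_mask_eq_one (hp : ∀ i v, p i v = 0 ∨ p i v = 1)
    (hDv : ∀ v, Dv v * ((1 / n : ℝ) * ∑ i, p i v) = 1) (v : ι) : 0 ≤ Dv v := by
  have hmean : 0 ≤ (1 / n : ℝ) * ∑ i, p i v :=
    mul_nonneg (by positivity) <| Finset.sum_nonneg fun i _ => by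
      rcases hp i v with h | h <;> simp [h]
  nlinarith [hDv v]

variable [Fintype ι]

theorem inner_eq_of_mask {q : ι → ℝ} (hq : ∀ v, q v = 0 ∨ q v = 1)
    {a b c : EuclideanSpace ℝ ι} (ha : ∀ v, q v = 0 → a v = 0) (hb : ∀ v, b v = q v * c v) :
    ⟪a, b⟫ = ⟪a, c⟫ := by
  simp only [PiLp.inner_apply, hb]
  refine Finset.sum_congr rfl fun v _ => ?_
  rcases hq v with h | h <;> simp [h, ha]

theorem norm_sq_eq_of_mask {q : ι → ℝ} (hq : ∀ v, q v = 0 ∨ q v = 1)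
    {b c : EuclideanSpace ℝ ι} (hb : ∀ v, b v = q v * c v) :
    ‖b‖ ^ 2 = ∑ v, q v * c v ^ 2 := by
  rw [EuclideanSpace.real_norm_sq_eq]
  refine Finset.sum_congr rfl fun v _ => ?_
  rcases hq v with h | h <;> simp [h, hb]

theorem inner_nonneg_of_diag (hDv : ∀ v, 0 ≤ Dv v) {w c : EuclideanSpace ℝ ι}
    (hc : ∀ v, c v = Dv v * w v) : 0 ≤ ⟪w, c⟫ := by
  simp only [PiLp.inner_apply, hc, RCLike.inner_apply, conj_trivial]
  exact Finset.sum_nonneg fun v _ => by nlinarith [hDv v, sq_nonneg (w v)]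

theorem mean_norm_sq_mask_eq_inner (hp : ∀ i v, p i v = 0 ∨ p i v = 1)
    (hDv : ∀ v, Dv v * ((1 / n : ℝ) * ∑ i, p i v) = 1) {w c : EuclideanSpace ℝ ι}
    (hc : ∀ v, c v = Dv v * w v) {b : Fin n → EuclideanSpace ℝ ι}
    (hb : ∀ i v, b i v = p i v * c v) :
    (1 / n : ℝ) * ∑ i, ‖b i‖ ^ 2 = ⟪w, c⟫ := by
  calc (1 / n : ℝ) * ∑ i, ‖b i‖ ^ 2 = ∑ v, ((1 / n : ℝ) * ∑ i, p i v) * c v ^ 2 := by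
        simp only [norm_sq_eq_of_mask (hp _) (hb _), Finset.mul_sum, Finset.sum_mul]
        rw [Finset.sum_comm]
        simp only [mul_assoc]
    _ = ⟪w, c⟫ := by
        simp only [PiLp.inner_apply, RCLike.inner_apply, conj_trivial]
        refine Finset.sum_congr rfl fun v _ => ?_
        rw [hc]
        linear_combination (Dv v * w v ^ 2) * hDv v

end SparseMask

theorem mean_norm_sq_sub_add_le {n d : ℕ} {L : ℝ} (hL : 0 < L)
    {fi : Fin n → EuclideanSpace ℝ (Fin d) → ℝ}
    {gi : Fin n → EuclideanSpace ℝ (Fin d) → EuclideanSpace ℝ (Fin d)}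
    (hgrad : ∀ i x, HasGradientAt (fi i) (gi i x) x) (hconv : ∀ i, ConvexOn ℝ Set.univ (fi i))
    (hlip : ∀ i, LipschitzWith L.toNNReal (gi i))
    {p : Fin n → Fin d → ℝ} (hp : ∀ i v, p i v = 0 ∨ p i v = 1)
    (hsupp : ∀ i x v, p i v = 0 → gi i x v = 0)
    {Dv : Fin d → ℝ} (hDv : ∀ v, Dv v * ((1 / n : ℝ) * ∑ i, p i v) = 1)
    {F : EuclideanSpace ℝ (Fin d) → ℝ} (hF : ∀ x, F x = (1 / n : ℝ) * ∑ i, fi i x)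
    {gF : EuclideanSpace ℝ (Fin d) → EuclideanSpace ℝ (Fin d)}
    (hgF : ∀ x, gF x = (n : ℝ)⁻¹ • ∑ i, gi i x)
    {x Dg : EuclideanSpace ℝ (Fin d)} (hDg : ∀ v, Dg v = Dv v * gF x v)
    {Di : Fin n → EuclideanSpace ℝ (Fin d)} (hDi : ∀ i v, Di i v = p i v * (Dv v * gF x v))
    (y : EuclideanSpace ℝ (Fin d)) :
    (1 / n : ℝ) * ∑ i, ‖gi i y - gi i x + Di i‖ ^ 2
      ≤ 2 * L * (F x - F y - ⟪gF y, x - y⟫) + 2 * ⟪gF y, Dg⟫ - ⟪gF x, Dg⟫ := by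
  have hDi' : ∀ i v, Di i v = p i v * Dg v := fun i v => by rw [hDi, hDg]
  have hcross : (1 / n : ℝ) * ∑ i, ⟪gi i y - gi i x, Di i⟫ = ⟪gF y, Dg⟫ - ⟪gF x, Dg⟫ := by
    have hmask : ∀ i, ⟪gi i y - gi i x, Di i⟫ = ⟪gi i y - gi i x, Dg⟫ := fun i =>
      inner_eq_of_mask (hp i) (fun v hv => by simp [hsupp i y v hv, hsupp i x v hv]) (hDi' i)
    simp only [hmask, hgF, real_inner_smul_left, sum_inner, inner_sub_left,
      Finset.sum_sub_distrib]
    ring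
  have hsq : (1 / n : ℝ) * ∑ i, ‖Di i‖ ^ 2 = ⟪gF x, Dg⟫ :=
    mean_norm_sq_mask_eq_inner hp hDv hDg hDi'
  have hbregman := mean_norm_sub_sq_le hL hgrad hconv hlip hF hgF x y
  have hexpand : (1 / n : ℝ) * ∑ i, ‖gi i y - gi i x + Di i‖ ^ 2
      = (1 / n : ℝ) * ∑ i, ‖gi i y - gi i x‖ ^ 2
        + 2 * ((1 / n : ℝ) * ∑ i, ⟪gi i y - gi i x, Di i⟫) + (1 / n : ℝ) * ∑ i, ‖Di i‖ ^ 2 := by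
    simp only [norm_add_sq_real, Finset.sum_add_distrib, ← Finset.mul_sum]
    ring
  linarith

theorem summand_le_of_variance_le {L θ φ a b V Fx Fy : ℝ} (hL : 0 < L) (hθ0 : 0 < θ)
    (hθ1 : θ ≤ 1) (hφ : φ = (1 - θ) / L) (hV : V ≤ 2 * L * (Fx - Fy - a) + 2 * b) :
    (1 - θ) / θ * a - φ / θ * b + (1 - θ) / (2 * L * θ) * V ≤ (1 - θ) / θ * (Fx - Fy) := by
  have hc : 0 ≤ (1 - θ) / (2 * L * θ) := div_nonneg (by linarith) (by positivity)
  have h := mul_le_mul_of_nonneg_left hV hc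
  have e : (1 - θ) / (2 * L * θ) * (2 * L * (Fx - Fy - a) + 2 * b)
      = (1 - θ) / θ * (Fx - Fy) - (1 - θ) / θ * a + φ / θ * b := by
    rw [hφ]; field_simp
  linarith

theorem mean_le_of_sum_le {m : ℕ} (hm : 0 < m) {θ T K B : ℝ} (hθ0 : 0 < θ) (a : ℕ → ℝ)
    (h : ∑ k ∈ Finset.range m, a k
      ≤ ∑ k ∈ Finset.range m, (1 - θ) / θ * (T - a k) + K * B) :
    (1 / m : ℝ) * ∑ k ∈ Finset.range m, a k ≤ (1 - θ) * T + θ * K / m * B := by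
  rw [← Finset.mul_sum, Finset.sum_sub_distrib, Finset.sum_const, Finset.card_range,
    nsmul_eq_mul] at h
  set S := ∑ k ∈ Finset.range m, a k
  have hmul : θ * S ≤ (1 - θ) * (m * T - S) + θ * K * B := by
    have := mul_le_mul_of_nonneg_left h hθ0.le
    have e : θ * ((1 - θ) / θ * (m * T - S) + K * B) = (1 - θ) * (m * T - S) + θ * K * B := by
      field_simp
    linarith
  have hS : S ≤ (1 - θ) * m * T + θ * K * B := by linarith
  have hm' : (m : ℝ) ≠ 0 := by exact_mod_cast hm.ne'
  calc (1 / m : ℝ) * S ≤ 1 / m * ((1 - θ) * m * T + θ * K * B) := by gcongr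
    _ = (1 - θ) * T + θ * K / m * B := by field_simp

theorem epoch_level_inequality_general {n d : ℕ} (L : ℝ) (hL : 0 < L)
    (fi : Fin n → EuclideanSpace ℝ (Fin d) → ℝ)
    (gi : Fin n → EuclideanSpace ℝ (Fin d) → EuclideanSpace ℝ (Fin d))
    (hgrad : ∀ i x, HasGradientAt (fi i) (gi i x) x)
    (hconv : ∀ i, ConvexOn ℝ Set.univ (fi i))
    (hlip : ∀ i, LipschitzWith L.toNNReal (gi i))
    (p : Fin n → Fin d → ℝ) (hp : ∀ i v, p i v = 0 ∨ p i v = 1)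
    (hsupp : ∀ i x v, p i v = 0 → gi i x v = 0)
    (Dv : Fin d → ℝ) (hDv : ∀ v, Dv v * ((1 / n : ℝ) * ∑ i, p i v) = 1)
    (F : EuclideanSpace ℝ (Fin d) → ℝ) (hF : ∀ x, F x = (1 / n : ℝ) * ∑ i, fi i x)
    (gF : EuclideanSpace ℝ (Fin d) → EuclideanSpace ℝ (Fin d))
    (hgF : ∀ x, gF x = (n : ℝ)⁻¹ • ∑ i, gi i x)
    (m : ℕ) (hm : 0 < m)
    (θ Δτ φ : ℝ) (hθ0 : 0 < θ) (hθ1 : θ < 1)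
    (hφ : φ = (1 - θ) / L)
    (xt xstar z0 zm : EuclideanSpace ℝ (Fin d))
    (Dg : EuclideanSpace ℝ (Fin d)) (hDg : ∀ v, Dg v = Dv v * gF xt v)
    (Di : Fin n → EuclideanSpace ℝ (Fin d))
    (hDi : ∀ i v, Di i v = p i v * (Dv v * gF xt v))
    (yh : ℕ → EuclideanSpace ℝ (Fin d))
    (V : ℕ → ℝ)
    (hV : ∀ k, V k = (1 / n : ℝ) * ∑ i, ‖gi i (yh k) - gi i xt + Di i‖ ^ 2)
    (hbound :
      ∑ k ∈ Finset.range m, (F (yh k) - F xstar) ≤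
        (∑ k ∈ Finset.range m,
            (((1 - θ) / θ) * ⟪gF (yh k), xt - yh k⟫
              - (φ / θ) * ⟪gF (yh k), Dg⟫
              + ((1 - θ) / (2 * L * θ)) * V k))
          + (L * θ * (1 + Δτ) / (2 * (1 - θ)))
              * (‖z0 - xstar‖ ^ 2 - ‖zm - xstar‖ ^ 2)) :
    (1 / m : ℝ) * ∑ k ∈ Finset.range m, (F (yh k) - F xstar) ≤
      (1 - θ) * (F xt - F xstar)
        + (L * θ ^ 2 * (1 + Δτ) / (2 * m * (1 - θ)))
            * (‖z0 - xstar‖ ^ 2 - ‖zm - xstar‖ ^ 2) := by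
  have hDg_nonneg : 0 ≤ ⟪gF xt, Dg⟫ :=
    inner_nonneg_of_diag (nonneg_of_mul_mean_mask_eq_one hp hDv) hDg
  have hstep : ∀ k ∈ Finset.range m,
      (1 - θ) / θ * ⟪gF (yh k), xt - yh k⟫ - φ / θ * ⟪gF (yh k), Dg⟫
          + (1 - θ) / (2 * L * θ) * V k
        ≤ (1 - θ) / θ * ((F xt - F xstar) - (F (yh k) - F xstar)) := fun k _ => by
    have hvar := mean_norm_sq_sub_add_le hL hgrad hconv hlip hp hsupp hDv hF hgF hDg hDi (yh k)
    rw [sub_sub_sub_cancel_right]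
    exact summand_le_of_variance_le hL hθ0 hθ1.le hφ (by rw [hV]; linarith)
  have hmean := mean_le_of_sum_le hm hθ0 _
    (hbound.trans (add_le_add_left (Finset.sum_le_sum hstep) _))
  have h1θ : 1 - θ ≠ 0 := (sub_pos.2 hθ1).ne'
  have hm0 : (m : ℝ) ≠ 0 := by exact_mod_cast hm.ne'
  convert hmean using 3
  field_simp

theorem epoch_level_inequality {n d : ℕ} (hn : 0 < n) (L : ℝ) (hL : 0 < L)
    (fi : Fin n → EuclideanSpace ℝ (Fin d) → ℝ)
    (gi : Fin n → EuclideanSpace ℝ (Fin d) → EuclideanSpace ℝ (Fin d))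
    (hgrad : ∀ i x, HasGradientAt (fi i) (gi i x) x)
    (hconv : ∀ i, ConvexOn ℝ Set.univ (fi i))
    (hlip : ∀ i, LipschitzWith L.toNNReal (gi i))
    (p : Fin n → Fin d → ℝ) (hp : ∀ i v, p i v = 0 ∨ p i v = 1)
    (hsupp : ∀ i x v, p i v = 0 → gi i x v = 0)
    (Dv : Fin d → ℝ) (hDv : ∀ v, Dv v * ((1 / n : ℝ) * ∑ i, p i v) = 1)
    (F : EuclideanSpace ℝ (Fin d) → ℝ) (hF : ∀ x, F x = (1 / n : ℝ) * ∑ i, fi i x)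
    (gF : EuclideanSpace ℝ (Fin d) → EuclideanSpace ℝ (Fin d))
    (hgF : ∀ x, gF x = (n : ℝ)⁻¹ • ∑ i, gi i x)
    (m : ℕ) (hm : 0 < m)
    (θ Δτ η φ : ℝ) (hθ0 : 0 < θ) (hθ1 : θ < 1) (hΔτ : 0 ≤ Δτ)
    (hη : η = (1 - θ) / (L * θ * (1 + Δτ))) (hφ : φ = (1 - θ) / L)
    (xt xstar z0 zm : EuclideanSpace ℝ (Fin d))
    (Dg : EuclideanSpace ℝ (Fin d)) (hDg : ∀ v, Dg v = Dv v * gF xt v)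
    (Di : Fin n → EuclideanSpace ℝ (Fin d))
    (hDi : ∀ i v, Di i v = p i v * (Dv v * gF xt v))
    (yh zh : ℕ → EuclideanSpace ℝ (Fin d))
    (hyh : ∀ k < m, yh k = θ • zh k + (1 - θ) • xt - φ • Dg)
    (V : ℕ → ℝ)
    (hV : ∀ k, V k = (1 / n : ℝ) * ∑ i, ‖gi i (yh k) - gi i xt + Di i‖ ^ 2)
    (hbound :
      ∑ k ∈ Finset.range m, (F (yh k) - F xstar) ≤
        (∑ k ∈ Finset.range m,
            (((1 - θ) / θ) * ⟪gF (yh k), xt - yh k⟫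
              - (φ / θ) * ⟪gF (yh k), Dg⟫
              + ((1 - θ) / (2 * L * θ)) * V k))
          + (L * θ * (1 + Δτ) / (2 * (1 - θ)))
              * (‖z0 - xstar‖ ^ 2 - ‖zm - xstar‖ ^ 2)) :
    (1 / m : ℝ) * ∑ k ∈ Finset.range m, (F (yh k) - F xstar) ≤
      (1 - θ) * (F xt - F xstar)
        + (L * θ ^ 2 * (1 + Δτ) / (2 * m * (1 - θ)))
            * (‖z0 - xstar‖ ^ 2 - ‖zm - xstar‖ ^ 2) :=
  epoch_level_inequality_general L hL fi gi hgrad hconv hlip p hp hsupp Dv hDv F hF gF hgF m hm θ Δτ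
    φ hθ0 hθ1 hφ xt xstar z0 zm Dg hDg Di hDi yh V hV hbound
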